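/- Let C be the multiplicative group of positive-real-valued differentiable functions on [0,1]. Let y₁,…,y_m ∈ C, and for each t let P_t(x) = Σ_{s=0}^{d_t} z_{t,s} x^s be a polynomial with nonnegative real coefficients, z_{t,0} = z_{t,d_t} = 1. Suppose Σ_{t=1}^m y_t ∧ P_t(y_t) = 0 in the exterior square ⋀²C. Then u ↦ Σ_{t=1}^m L̃_t(y_t(u)) is constant on [0,1], where L̃_t(x) = (1/2)∫₀ˣ (log P_t(y)/y - log(y)·P_t'(y)/P_t(y)) dy. -/

import Mathlib

open MeasureTheory Real TensorProduct Polynomial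

/-- The Rogers dilogarithm of higher degree associated with a polynomial `P`:
`L̃(x) = (1/2)∫₀ˣ (log P(y)/y - log(y)·P'(y)/P(y)) dy`. -/
noncomputable def Ltil (P : Polynomial ℝ) (x : ℝ) : ℝ :=
  (1/2) * ∫ y in (0:ℝ)..x,
    (Real.log (P.eval y) / y - Real.log y * P.derivative.eval y / P.eval y)

/-- The multiplicative abelian group of positive-valued differentiable real functions. -/
def PD : Type := {f : ℝ → ℝ // (∀ x, 0 < f x) ∧ Differentiable ℝ f}

noncomputable instance : CommGroup PD where
  mul f g := ⟨fun x => f.1 x * g.1 x,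
    fun x => mul_pos (f.2.1 x) (g.2.1 x), f.2.2.mul g.2.2⟩
  one := ⟨fun _ => 1, fun _ => one_pos, differentiable_const 1⟩
  inv f := ⟨fun x => (f.1 x)⁻¹,
    fun x => inv_pos.2 (f.2.1 x), f.2.2.inv fun x => (f.2.1 x).ne'⟩
  mul_assoc a b c := Subtype.ext (funext fun x => mul_assoc _ _ _)
  one_mul a := Subtype.ext (funext fun x => one_mul _)
  mul_one a := Subtype.ext (funext fun x => mul_one _)
  inv_mul_cancel a := Subtype.ext (funext fun x => inv_mul_cancel₀ (a.2.1 x).ne')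
  mul_comm a b := Subtype.ext (funext fun x => mul_comm _ _)

/-- The symmetric subgroup `S²C` of `C ⊗ C`. -/
noncomputable def SymSub : AddSubgroup (TensorProduct ℤ (Additive PD) (Additive PD)) :=
  AddSubgroup.closure {t | ∃ a b : Additive PD, t = a ⊗ₜ[ℤ] b + b ⊗ₜ[ℤ] a}

/-! For `f, g ∈ C` and a point `u`, the quantity `log g(u) · f'(u)/f(u) - log f(u) · g'(u)/g(u)` is
biadditive and antisymmetric in `(f, g)`, so it factors through `⋀²C`; the wedge relation makes its
sum over `t` vanish at every `u` for `(f, g) = (y_t, P_t(y_t))`. By the chain rule this term is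
twice the derivative of `u ↦ L̃_t(y_t(u))`, so `∑ L̃_t(y_t)` has derivative zero everywhere.
The integral defining `L̃_t` converges at `0` because `P_t(0) = 1` makes `log P_t(y)/y` extend
continuously to `0`, and `log` is integrable. -/

namespace PD

lemma logDeriv_mul_apply (f g : PD) (u : ℝ) :
    logDeriv (f * g).1 u = logDeriv f.1 u + logDeriv g.1 u :=
  logDeriv_mul u (f.2.1 u).ne' (g.2.1 u).ne' (f.2.2 u) (g.2.2 u)

lemma log_mul_apply (f g : PD) (u : ℝ) :
    Real.log ((f * g).1 u) = Real.log (f.1 u) + Real.log (g.1 u) :=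
  Real.log_mul (f.2.1 u).ne' (g.2.1 u).ne'

noncomputable def logWedge (u : ℝ) (f g : PD) : ℝ :=
  Real.log (g.1 u) * logDeriv f.1 u - Real.log (f.1 u) * logDeriv g.1 u

lemma logWedge_mul_left (u : ℝ) (f g h : PD) :
    logWedge u (f * g) h = logWedge u f h + logWedge u g h := by
  simp only [logWedge, logDeriv_mul_apply, log_mul_apply]; ring

lemma logWedge_mul_right (u : ℝ) (f g h : PD) :
    logWedge u f (g * h) = logWedge u f g + logWedge u f h := by
  simp only [logWedge, logDeriv_mul_apply, log_mul_apply]; ring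

lemma logWedge_swap (u : ℝ) (f g : PD) : logWedge u g f = -logWedge u f g := by
  simp only [logWedge]; ring

noncomputable def logWedgeHom (u : ℝ) : Additive PD →+ Additive PD →+ ℝ :=
  AddMonoidHom.mk'
    (fun f => AddMonoidHom.mk' (fun g => logWedge u f.toMul g.toMul)
      (fun g h => logWedge_mul_right u f.toMul g.toMul h.toMul))
    (fun f g => AddMonoidHom.ext fun h => logWedge_mul_left u f.toMul g.toMul h.toMul)

noncomputable def tensorLogWedge (u : ℝ) : Additive PD ⊗[ℤ] Additive PD →+ ℝ :=
  liftAddHom (logWedgeHom u) fun r f g => by simp only [map_zsmul, AddMonoidHom.smul_apply]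

lemma symSub_le_ker_tensorLogWedge (u : ℝ) : SymSub ≤ (tensorLogWedge u).ker := by
  rw [SymSub, AddSubgroup.closure_le]
  rintro _ ⟨f, g, rfl⟩
  rw [SetLike.mem_coe, AddMonoidHom.mem_ker, map_add]
  exact add_eq_zero_iff_eq_neg.2 (logWedge_swap u g.toMul f.toMul)

lemma sum_logWedge_eq_zero {ι : Type*} (s : Finset ι) (f g : ι → PD)
    (h : QuotientAddGroup.mk' SymSub
      (∑ t ∈ s, Additive.ofMul (f t) ⊗ₜ[ℤ] Additive.ofMul (g t)) = 0) (u : ℝ) :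
    ∑ t ∈ s, logWedge u (f t) (g t) = 0 := by
  have hker := symSub_le_ker_tensorLogWedge u ((QuotientAddGroup.eq_zero_iff _).1 h)
  rwa [AddMonoidHom.mem_ker, map_sum] at hker

end PD

noncomputable def rogersIntegrand (P : ℝ[X]) (y : ℝ) : ℝ :=
  Real.log (P.eval y) / y - Real.log y * P.derivative.eval y / P.eval y

section

open Set Filter Topology

variable {P : ℝ[X]}

lemma continuousAt_rogersIntegrand {x : ℝ} (hx : x ≠ 0) (hPx : P.eval x ≠ 0) :
    ContinuousAt (rogersIntegrand P) x :=
  ((P.continuousAt.log hPx).div continuousAt_id hx).sub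
    (((Real.continuousAt_log hx).mul P.derivative.continuousAt).div P.continuousAt hPx)

/-- `log P(y) / y` is the slope of `log ∘ P` at `0`, so `dslope` extends it continuously to `0`. -/
lemma intervalIntegrable_log_eval_div (hP0 : P.eval 0 = 1) {b : ℝ}
    (hP : ∀ y ∈ uIcc 0 b, P.eval y ≠ 0) :
    IntervalIntegrable (fun y => Real.log (P.eval y) / y) volume 0 b := by
  set s := {y | P.eval y ≠ 0}
  have hs : s ∈ 𝓝 0 := (isOpen_ne_fun P.continuous continuous_const).mem_nhds (by simp [hP0])
  have hslope : ContinuousOn (dslope (fun y => Real.log (P.eval y)) 0) s :=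
    (continuousOn_dslope hs).2 ⟨fun y hy => (P.continuousAt.log hy).continuousWithinAt,
      (P.differentiableAt.log (by simp [hP0]))⟩
  refine ((hslope.mono hP).intervalIntegrable).congr_uIoo fun y hy => ?_
  have hy0 : y ≠ 0 := by rintro rfl; exact left_notMem_uIoo hy
  simp [dslope_of_ne _ hy0, slope_def_field, hP0]

lemma intervalIntegrable_rogersIntegrand (hP0 : P.eval 0 = 1) {b : ℝ}
    (hP : ∀ y ∈ uIcc 0 b, P.eval y ≠ 0) :
    IntervalIntegrable (rogersIntegrand P) volume 0 b := by
  have hlog : IntervalIntegrable (fun y => Real.log y * (P.derivative.eval y / P.eval y))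
      volume 0 b :=
    intervalIntegral.intervalIntegrable_log'.mul_continuousOn
      (P.derivative.continuous.continuousOn.div P.continuous.continuousOn hP)
  convert (intervalIntegrable_log_eval_div hP0 hP).sub hlog using 1
  funext y
  rw [rogersIntegrand, mul_div_assoc]

lemma hasDerivAt_Ltil (hP0 : P.eval 0 = 1) {x : ℝ} (hx : x ≠ 0)
    (hP : ∀ y ∈ uIcc 0 x, P.eval y ≠ 0) :
    HasDerivAt (Ltil P) (1 / 2 * rogersIntegrand P x) x := by
  have hPx : P.eval x ≠ 0 := hP x right_mem_uIcc
  have hmeas : StronglyMeasurableAtFilter (rogersIntegrand P) (𝓝 x) volume :=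
    ContinuousOn.stronglyMeasurableAtFilter
      (isOpen_ne.inter (isOpen_ne_fun P.continuous continuous_const))
      (fun y hy => (continuousAt_rogersIntegrand hy.1 hy.2).continuousWithinAt) x ⟨hx, hPx⟩
  exact (intervalIntegral.integral_hasDerivAt_right (intervalIntegrable_rogersIntegrand hP0 hP)
    hmeas (continuousAt_rogersIntegrand hx hPx)).const_mul _

lemma PD.hasDerivAt_Ltil_comp (hP0 : P.eval 0 = 1) (hP : ∀ y, 0 ≤ y → P.eval y ≠ 0)
    {f g : PD} (hg : ∀ x, g.1 x = P.eval (f.1 x)) (u : ℝ) :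
    HasDerivAt (fun u => Ltil P (f.1 u)) (1 / 2 * PD.logWedge u f g) u := by
  have hfu := f.2.1 u
  have hPf : ∀ y ∈ uIcc 0 (f.1 u), P.eval y ≠ 0 := fun y hy =>
    hP y (by rw [uIcc_of_le hfu.le] at hy; exact hy.1)
  have hlogDeriv : logDeriv g.1 u = logDeriv P.eval (f.1 u) * deriv f.1 u := by
    rw [show g.1 = fun x => P.eval (f.1 x) from funext hg]
    exact logDeriv_comp P.differentiableAt (f.2.2 u)
  refine ((hasDerivAt_Ltil hP0 hfu.ne' hPf).comp u (f.2.2 u).hasDerivAt).congr_deriv ?_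
  have hPfu := hP _ hfu.le
  simp only [PD.logWedge, rogersIntegrand, hlogDeriv, logDeriv_apply, Polynomial.deriv, hg u]
  field_simp

end

lemma eval_zero_sum_C_mul_X_pow (d : ℕ) (z : ℕ → ℝ) :
    (∑ s ∈ Finset.range (d + 1), C (z s) * X ^ s).eval 0 = z 0 := by
  simp [eval_finsetSum, Finset.sum_range_succ']

lemma one_le_eval_sum_C_mul_X_pow {d : ℕ} {z : ℕ → ℝ} (hz0 : z 0 = 1)
    (hz : ∀ s, s ≤ d → 0 ≤ z s) {y : ℝ} (hy : 0 ≤ y) :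
    1 ≤ (∑ s ∈ Finset.range (d + 1), C (z s) * X ^ s).eval y := by
  rw [eval_finsetSum, Finset.sum_range_succ', pow_zero, mul_one, eval_C, hz0,
    le_add_iff_nonneg_left]
  exact Finset.sum_nonneg fun s hs => by
    simpa using mul_nonneg (hz (s + 1) (Finset.mem_range.1 hs)) (pow_nonneg hy (s + 1))

theorem higher_rogers_constancy_general
    (m : ℕ) (d : Fin m → ℕ)
    (z : Fin m → ℕ → ℝ)
    (hz0 : ∀ t, z t 0 = 1)
    (hznn : ∀ t s, s ≤ d t → 0 ≤ z t s)
    (P : Fin m → Polynomial ℝ)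
    (hP : ∀ t, P t = ∑ s ∈ Finset.range (d t + 1),
      Polynomial.C (z t s) * Polynomial.X ^ s)
    (y Y : Fin m → PD)
    (hY : ∀ t, ∀ x : ℝ, (Y t).1 x = (P t).eval ((y t).1 x))
    (hwedge : QuotientAddGroup.mk' SymSub
      (∑ t, (Additive.ofMul (y t)) ⊗ₜ[ℤ] (Additive.ofMul (Y t))) = 0) :
    ∀ u ∈ Set.Icc (0:ℝ) 1, ∀ v ∈ Set.Icc (0:ℝ) 1,
      ∑ t, Ltil (P t) ((y t).1 u) = ∑ t, Ltil (P t) ((y t).1 v) := by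
  intro u _ v _
  have hP0 (t : Fin m) : (P t).eval 0 = 1 := by rw [hP t, eval_zero_sum_C_mul_X_pow, hz0 t]
  have hPne (t : Fin m) (x : ℝ) (hx : 0 ≤ x) : (P t).eval x ≠ 0 := by
    have hle := hP t ▸ one_le_eval_sum_C_mul_X_pow (hz0 t) (hznn t) hx
    exact (zero_lt_one.trans_le hle).ne'
  have hderiv (w : ℝ) : HasDerivAt (fun w => ∑ t, Ltil (P t) ((y t).1 w)) 0 w := by
    have := HasDerivAt.fun_sum (u := Finset.univ) fun t _ =>
      PD.hasDerivAt_Ltil_comp (hP0 t) (hPne t) (hY t) w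
    rwa [← Finset.mul_sum, PD.sum_logWedge_eq_zero _ _ _ hwedge w, mul_zero] at this
  exact is_const_of_deriv_eq_zero (fun w => (hderiv w).differentiableAt)
    (fun w => (hderiv w).deriv) u v

theorem higher_rogers_constancy
    (m : ℕ) (d : Fin m → ℕ) (hd : ∀ t, 1 ≤ d t)
    (z : Fin m → ℕ → ℝ)
    (hz0 : ∀ t, z t 0 = 1) (hzd : ∀ t, z t (d t) = 1)
    (hznn : ∀ t s, s ≤ d t → 0 ≤ z t s)
    (P : Fin m → Polynomial ℝ)
    (hP : ∀ t, P t = ∑ s ∈ Finset.range (d t + 1),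
      Polynomial.C (z t s) * Polynomial.X ^ s)
    (y Y : Fin m → PD)
    (hY : ∀ t, ∀ x : ℝ, (Y t).1 x = (P t).eval ((y t).1 x))
    (hwedge : QuotientAddGroup.mk' SymSub
      (∑ t, (Additive.ofMul (y t)) ⊗ₜ[ℤ] (Additive.ofMul (Y t))) = 0) :
    ∀ u ∈ Set.Icc (0:ℝ) 1, ∀ v ∈ Set.Icc (0:ℝ) 1,
      ∑ t, Ltil (P t) ((y t).1 u) = ∑ t, Ltil (P t) ((y t).1 v) :=
  higher_rogers_constancy_general m d z hz0 hznn P hP y Y hY hwedge
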